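/- For every natural number n and every complex number x, C_n(x+i) − C_n(x−i) = x·((x+i)ⁿ − (x−i)ⁿ). -/
import Mathlib


open Polynomial Finset

/-- The pair of polynomial sequences (Aₙ, Cₙ) from the paper:
A₀ = X, C₀ = 0, and
A_{n+1} = ((n+1)/(n+2))·(X·Aₙ + ∑_{k=0}^{n} λₙᵏ·A_k),
C_{n+1} = ((n+1)/(n+2))·((X²+1)·Xⁿ + ∑_{k=0}^{n} λₙᵏ·C_k),
where λₙᵏ is the coefficient of Xᵏ in Cₙ. -/
noncomputable def AC : ℕ → Polynomial ℂ × Polynomial ℂ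
  | 0 => (Polynomial.X, 0)
  | (n+1) =>
    (((n+1 : ℂ)/(n+2)) • (Polynomial.X * (AC n).1 +
        ∑ k ∈ (Finset.range (n+1)).attach, ((AC n).2.coeff k) • (AC k).1),
     ((n+1 : ℂ)/(n+2)) • ((Polynomial.X^2 + 1) * Polynomial.X^n +
        ∑ k ∈ (Finset.range (n+1)).attach, ((AC n).2.coeff k) • (AC k).2))
  decreasing_by
  all_goals first
    | exact Nat.lt_succ_self n
    | exact Nat.lt_succ_of_lt (Finset.mem_range.mp k.2)
    | exact Finset.mem_range.mp k.2

noncomputable def polyA (n : ℕ) : Polynomial ℂ := (AC n).1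
noncomputable def polyC (n : ℕ) : Polynomial ℂ := (AC n).2

lemma polyC_zero : polyC 0 = 0 := by rw [polyC, AC]

lemma polyC_succ (n : ℕ) : polyC (n+1) =
    ((n+1 : ℂ)/(n+2)) • ((Polynomial.X^2 + 1) * Polynomial.X^n +
        ∑ k ∈ (Finset.range (n+1)).attach, ((polyC n).coeff k) • (polyC k)) := by
  rw [polyC, AC]; rfl


lemma coeff_polyC_eq_zero : ∀ n m : ℕ, n + 1 < m → (polyC n).coeff m = 0 := by
  intro n
  induction n using Nat.strong_induction_on with
  | _ n ih =>
    match n with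
    | 0 => intro m _; rw [polyC_zero]; simp
    | n+1 =>
      intro m hm
      rw [polyC_succ, Polynomial.coeff_smul, Polynomial.coeff_add,
        Polynomial.finset_sum_coeff]
      have h1 : ((Polynomial.X^2 + 1) * Polynomial.X^n : Polynomial ℂ).coeff m = 0 := by
        rw [add_mul, one_mul, ← pow_add, Polynomial.coeff_add, Polynomial.coeff_X_pow,
          Polynomial.coeff_X_pow]
        have : ¬ m = 2 + n := by omega
        have h2 : ¬ m = n := by omega
        simp [this, h2]
      rw [h1]
      rw [Finset.sum_eq_zero]
      · simp
      · intro k hk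
        rw [Polynomial.coeff_smul]
        have hk' := Finset.mem_range.mp k.2
        rw [ih k (by omega) m (by omega)]
        simp


lemma coeff_polyC_top (n : ℕ) : (polyC n).coeff (n+1) = (n : ℂ)/(n+1) := by
  cases n with
  | zero => rw [polyC_zero]; simp
  | succ n =>
    rw [polyC_succ, Polynomial.coeff_smul, Polynomial.coeff_add,
      Polynomial.finset_sum_coeff]
    have h1 : ((Polynomial.X^2 + 1) * Polynomial.X^n : Polynomial ℂ).coeff (n+1+1) = 1 := by
      rw [add_mul, one_mul, ← pow_add, Polynomial.coeff_add, Polynomial.coeff_X_pow,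
        Polynomial.coeff_X_pow]
      have : n+1+1 = 2+n := by omega
      have h2 : ¬ n+1+1 = n := by omega
      simp [this, h2]
    rw [h1, Finset.sum_eq_zero, add_zero, smul_eq_mul, mul_one]
    · push_cast; ring
    · intro k hk
      rw [Polynomial.coeff_smul,
        coeff_polyC_eq_zero k (n+1+1) (by have := Finset.mem_range.mp k.2; omega)]
      simp

lemma natDegree_polyC_le (n : ℕ) : (polyC n).natDegree ≤ n + 1 :=
  Polynomial.natDegree_le_iff_coeff_eq_zero.mpr (fun m hm => coeff_polyC_eq_zero n m hm)

theorem stmt5 (n : ℕ) (x : ℂ) :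
    (polyC n).eval (x + Complex.I) - (polyC n).eval (x - Complex.I) =
      x * ((x + Complex.I) ^ n - (x - Complex.I) ^ n) := by
  induction n using Nat.strong_induction_on with
  | _ n ih =>
    match n with
    | 0 => rw [polyC_zero]; simp
    | n+1 =>
      have hI : Complex.I ^ 2 = -1 := Complex.I_sq
      have h1 : ((n:ℂ)+1) ≠ 0 := by
        have : ((n+1:ℕ):ℂ) ≠ 0 := Nat.cast_ne_zero.mpr (by omega)
        push_cast at this; exact this
      have h2 : ((n:ℂ)+2) ≠ 0 := by
        have : ((n+2:ℕ):ℂ) ≠ 0 := Nat.cast_ne_zero.mpr (by omega)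
        push_cast at this; exact this
      set a := x + Complex.I with ha
      set b := x - Complex.I with hb
      have hev : ∀ z : ℂ, (polyC n).eval z =
          (∑ k ∈ Finset.range (n+1), (polyC n).coeff k * z ^ k) +
            ((n:ℂ)/(n+1)) * z ^ (n+1) := by
        intro z
        rw [Polynomial.eval_eq_sum_range' (Nat.lt_succ_of_le (natDegree_polyC_le n)),
          Finset.sum_range_succ, coeff_polyC_top]
      have hsum : ((n:ℂ)+1) * ((∑ k ∈ Finset.range (n+1), (polyC n).coeff k * a ^ k) -
            (∑ k ∈ Finset.range (n+1), (polyC n).coeff k * b ^ k)) =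
          ((n:ℂ)+1) * x * (a ^ n - b ^ n) - (n:ℂ) * (a ^ (n+1) - b ^ (n+1)) := by
        have hthis := ih n (Nat.lt_succ_self n)
        rw [hev a, hev b] at hthis
        have hc : (n:ℂ)/(n+1) * ((n:ℂ)+1) = n := div_mul_cancel₀ _ h1
        linear_combination ((n:ℂ)+1) * hthis - (a^(n+1) - b^(n+1)) * hc
      rw [polyC_succ]
      rw [Polynomial.eval_smul, Polynomial.eval_smul, smul_eq_mul, smul_eq_mul,
        Polynomial.eval_add, Polynomial.eval_add, Polynomial.eval_finset_sum,
        Polynomial.eval_finset_sum]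
      simp only [Polynomial.eval_mul, Polynomial.eval_add, Polynomial.eval_pow,
        Polynomial.eval_X, Polynomial.eval_one, Polynomial.eval_smul, smul_eq_mul]
      rw [Finset.sum_attach (range (n+1)) (fun k => (polyC n).coeff k * (polyC k).eval a),
        Finset.sum_attach (range (n+1)) (fun k => (polyC n).coeff k * (polyC k).eval b)]
      have hdiff : (∑ k ∈ Finset.range (n+1), (polyC n).coeff k * (polyC k).eval a) -
          (∑ k ∈ Finset.range (n+1), (polyC n).coeff k * (polyC k).eval b) =
          x * ((∑ k ∈ Finset.range (n+1), (polyC n).coeff k * a ^ k) -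
            (∑ k ∈ Finset.range (n+1), (polyC n).coeff k * b ^ k)) := by
        rw [← Finset.sum_sub_distrib, mul_sub, Finset.mul_sum, Finset.mul_sum,
          ← Finset.sum_sub_distrib]
        refine Finset.sum_congr rfl fun k hk => ?_
        have hk2 := ih k (by have := Finset.mem_range.mp hk; omega)
        linear_combination (polyC n).coeff k * hk2
      rw [div_mul_eq_mul_div, div_mul_eq_mul_div, div_sub_div_same, div_eq_iff h2,
        ha, hb] at *
      linear_combination ((n:ℂ)+1) * hdiff + x * hsum +
        (((n:ℂ)+1) * ((x+Complex.I)^n - (x-Complex.I)^n)) * hI
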